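/- arXiv:math/0609066 — 8 statements merged into one kernel-verified Lean document; each statement's English description precedes it below -/
import Mathlib

section
/- Let O be a commutative ring, G a finite group, and I ⊆ J right O[G]-modules that are finitely generated and free as O-modules, such that J/I is a projective O-module. Then the sequence 0 → Hom_{O[G]}(J/I, O[G]) → Hom_{O[G]}(J, O[G]) → Hom_{O[G]}(I, O[G]) → 0, whose maps are precomposition with the quotient map J → J/I and restriction of homomorphisms from J to I, is exact. -/
/-!
For finite `G`, every `k`-linear functional `φ : M → k` on a right `k[G]`-module yields the
`k[G]`-linear map `m ↦ ∑ g, g⁻¹ φ (m g)` into `k[G]`, and every `k[G]`-linear `f` arises this way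
from its coefficient at `1`; this identifies `Hom_{k[G]}(M, k[G])` with `Hom_k(M, k)` naturally
in `M`. Restriction to `I` is therefore surjective as soon as `k`-linear functionals extend from
`I` to `J`, which holds because `I` is a `k`-linear direct summand of `J` when `J/I` is
`k`-projective. Exactness at the other two places is the universal property of the quotient.
-/

open MonoidAlgebra MulOpposite

theorem Submodule.exists_retraction_of_projective_quotient {R S M : Type*} [Semiring R] [Ring S]
    [AddCommGroup M] [Module R M] [Module S M] [SMul R S] [IsScalarTower R S M]
    (p : Submodule S M) [Module.Projective R (M ⧸ p)] :
    ∃ r : M →ₗ[R] p, r ∘ₗ p.subtype.restrictScalars R = LinearMap.id :=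
  ((LinearMap.exact_subtype_mkQ p).split_tfae (f := p.subtype.restrictScalars R)
    (g := p.mkQ.restrictScalars R) Subtype.val_injective p.mkQ_surjective).out 0 1 |>.mp
    (Module.projective_lifting_property (p.mkQ.restrictScalars R) _ p.mkQ_surjective)

namespace MonoidAlgebra

section Semiring
variable {k G : Type*} [Semiring k]

def lcoeff (g : G) : k[G] →ₗ[k] k where
  toFun x := x.coeff g
  map_add' _ _ := rfl
  map_smul' _ _ := rfl

@[simp]
theorem lcoeff_apply (g : G) (x : k[G]) : lcoeff g x = x.coeff g := rfl

theorem univ_sum_single_coeff [Fintype G] (x : k[G]) : ∑ g : G, single g (x.coeff g) = x :=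
  coeff_injective <| by simp only [coeff_sum, coeff_single, Finsupp.univ_sum_single]

end Semiring

variable {k G M N : Type*} [CommSemiring k] [Group G]
  [AddCommMonoid M] [Module k M] [Module k[G]ᵐᵒᵖ M] [IsScalarTower k k[G]ᵐᵒᵖ M]

theorem op_single_smul_op_single_smul (g h : G) (c : k) (m : M) :
    op (single g (1 : k)) • op (single h c) • m = c • op (single (h * g) (1 : k)) • m := by
  rw [smul_smul, ← op_mul, single_mul_single, mul_one, ← smul_assoc, ← op_smul, smul_single',
    mul_one]

variable [Fintype G]

noncomputable def liftDual (φ : M →ₗ[k] k) : M →ₗ[k[G]ᵐᵒᵖ] k[G] where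
  toFun m := ∑ g : G, single g⁻¹ (φ (op (single g (1 : k)) • m))
  map_add' x y := by simp [smul_add, Finset.sum_add_distrib]
  map_smul' r m := by
    induction r using MulOpposite.rec' with | _ r
    induction r using induction_linear with
    | zero => simp
    | add a b ha hb =>
      simp only [op_add, add_smul, smul_add, map_add, single_add, Finset.sum_add_distrib, ha, hb,
        RingHom.id_apply]
    | single h c =>
      simp only [op_single_smul_op_single_smul, map_smul, RingHom.id_apply, op_smul_eq_mul,
        Finset.sum_mul, single_mul_single, smul_eq_mul]
      refine Fintype.sum_bijective (h * ·) (Group.mulLeft_bijective h) _ _ fun g => ?_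
      simp [mul_comm c, mul_assoc]

theorem liftDual_apply (φ : M →ₗ[k] k) (m : M) :
    liftDual (G := G) φ m = ∑ g : G, single g⁻¹ (φ (op (single g (1 : k)) • m)) := rfl

theorem liftDual_lcoeff_one_comp (f : M →ₗ[k[G]ᵐᵒᵖ] k[G]) :
    liftDual (lcoeff 1 ∘ₗ f.restrictScalars k) = f := by
  refine LinearMap.ext fun m => ?_
  simp only [liftDual_apply, LinearMap.comp_apply, LinearMap.restrictScalars_apply, map_smul,
    op_smul_eq_mul, lcoeff_apply, coeff_mul_single_apply, one_mul, mul_one]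
  exact (Equiv.sum_comp (Equiv.inv G) fun g => single g ((f m).coeff g)).trans
    (univ_sum_single_coeff _)

variable [AddCommMonoid N] [Module k N] [Module k[G]ᵐᵒᵖ N] [IsScalarTower k k[G]ᵐᵒᵖ N]

theorem liftDual_comp (φ : M →ₗ[k] k) (u : N →ₗ[k[G]ᵐᵒᵖ] M) :
    liftDual φ ∘ₗ u = liftDual (φ ∘ₗ u.restrictScalars k) :=
  LinearMap.ext fun n => by
    simp only [LinearMap.comp_apply, liftDual_apply, LinearMap.restrictScalars_apply, map_smul]

end MonoidAlgebra

theorem MonoidAlgebra.surjective_comp_subtype_of_projective_quotient {k G M : Type*} [CommRing k]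
    [Group G] [Fintype G] [AddCommGroup M] [Module k M] [Module k[G]ᵐᵒᵖ M]
    [IsScalarTower k k[G]ᵐᵒᵖ M] (p : Submodule k[G]ᵐᵒᵖ M) [Module.Projective k (M ⧸ p)] :
    Function.Surjective fun f : M →ₗ[k[G]ᵐᵒᵖ] k[G] => f ∘ₗ p.subtype := by
  intro f
  obtain ⟨r, hr⟩ := p.exists_retraction_of_projective_quotient (R := k)
  refine ⟨liftDual (lcoeff 1 ∘ₗ f.restrictScalars k ∘ₗ r), ?_⟩
  change liftDual _ ∘ₗ p.subtype = f
  rw [liftDual_comp, LinearMap.comp_assoc, LinearMap.comp_assoc, hr, LinearMap.comp_id,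
    liftDual_lcoeff_one_comp]

theorem stmt_1_general (O : Type*) [CommRing O] (G : Type*) [Group G] [Finite G]
    (J : Type*) [AddCommGroup J] [Module O J]
    [Module (MonoidAlgebra O G)ᵐᵒᵖ J] [IsScalarTower O (MonoidAlgebra O G)ᵐᵒᵖ J]
    (I : Submodule (MonoidAlgebra O G)ᵐᵒᵖ J)
    [Module.Projective O (J ⧸ I)] :
    Function.Injective
      (fun g : (J ⧸ I) →ₗ[(MonoidAlgebra O G)ᵐᵒᵖ] MonoidAlgebra O G => g ∘ₗ I.mkQ) ∧
    (∀ f : J →ₗ[(MonoidAlgebra O G)ᵐᵒᵖ] MonoidAlgebra O G,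
      f ∘ₗ I.subtype = 0 ↔
        ∃ g : (J ⧸ I) →ₗ[(MonoidAlgebra O G)ᵐᵒᵖ] MonoidAlgebra O G, f = g ∘ₗ I.mkQ) ∧
    Function.Surjective
      (fun f : J →ₗ[(MonoidAlgebra O G)ᵐᵒᵖ] MonoidAlgebra O G => f ∘ₗ I.subtype) := by
  have := Fintype.ofFinite G
  refine ⟨fun _ _ h => (LinearMap.cancel_right I.mkQ_surjective).1 h, fun f => ?_,
    MonoidAlgebra.surjective_comp_subtype_of_projective_quotient I⟩
  rw [← LinearMap.le_ker_iff_comp_subtype_eq_zero]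
  constructor
  · exact fun h => ⟨I.liftQ f h, (I.liftQ_mkQ f h).symm⟩
  · rintro ⟨g, rfl⟩
    exact I.ker_mkQ.ge.trans (LinearMap.ker_le_ker_comp _ _)

/-- Let `O` be a commutative ring, `G` a finite group, and
`I ⊆ J` right `O[G]`-modules (modules over the opposite of the group ring)
that are finitely generated and free as `O`-modules, with `J/I` projective
over `O`.  Then `0 → Hom_{O[G]}(J/I, O[G]) → Hom_{O[G]}(J, O[G]) →
Hom_{O[G]}(I, O[G]) → 0` is exact, where the maps are precomposition with
the quotient map and restriction. -/
theorem stmt_1 (O : Type*) [CommRing O] (G : Type*) [Group G] [Finite G]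
    (J : Type*) [AddCommGroup J] [Module O J]
    [Module (MonoidAlgebra O G)ᵐᵒᵖ J] [IsScalarTower O (MonoidAlgebra O G)ᵐᵒᵖ J]
    (I : Submodule (MonoidAlgebra O G)ᵐᵒᵖ J)
    [Module.Finite O J] [Module.Free O J]
    [Module.Finite O (I.restrictScalars O)] [Module.Free O (I.restrictScalars O)]
    [Module.Projective O (J ⧸ I)] :
    Function.Injective
      (fun g : (J ⧸ I) →ₗ[(MonoidAlgebra O G)ᵐᵒᵖ] MonoidAlgebra O G => g ∘ₗ I.mkQ) ∧
    (∀ f : J →ₗ[(MonoidAlgebra O G)ᵐᵒᵖ] MonoidAlgebra O G,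
      f ∘ₗ I.subtype = 0 ↔
        ∃ g : (J ⧸ I) →ₗ[(MonoidAlgebra O G)ᵐᵒᵖ] MonoidAlgebra O G, f = g ∘ₗ I.mkQ) ∧
    Function.Surjective
      (fun f : J →ₗ[(MonoidAlgebra O G)ᵐᵒᵖ] MonoidAlgebra O G => f ∘ₗ I.subtype) :=
  stmt_1_general O G J I
end

section
/- Let O be a commutative ring, G a finite group, and I a saturated right ideal of O[G]. Then I = {α ∈ O[G] : β·α = 0 for every β ∈ I^⊥}. -/
open MonoidAlgebra MulOpposite

/-- The left annihilator `I^⊥ = {β : β·I = 0}` of a right ideal `I` of the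
group ring `O[G]`, as an `O`-submodule of `O[G]`. -/
def leftAnnihilator (O : Type*) [CommRing O] (G : Type*) [Group G]
    (I : Submodule (MonoidAlgebra O G)ᵐᵒᵖ (MonoidAlgebra O G)) :
    Submodule O (MonoidAlgebra O G) where
  carrier := {β | ∀ x ∈ I, β * x = 0}
  add_mem' := by
    intro a b ha hb x hx
    rw [add_mul, ha x hx, hb x hx, add_zero]
  zero_mem' := by
    intro x hx
    rw [zero_mul]
  smul_mem' := by
    intro c a ha x hx
    rw [smul_mul_assoc, ha x hx, smul_zero]

/-!
Since `O[G]/I` is projective over `O`, its `O`-linear functionals separate points, so it suffices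
that every functional `f` on `O[G]` vanishing on `I` vanishes at `α`. For finite `G` such an `f`
is represented by `β = ∑ₕ f(h) h⁻¹`, in the sense that `(β x)(g) = f(x g⁻¹)`; as `I` is a right
ideal, `β ∈ I^⊥`, and then `f α = (β α)(1) = 0`.
-/

theorem Submodule.mem_of_forall_dual_eq_zero {R S M : Type*} [CommRing R] [Ring S]
    [AddCommGroup M] [Module R M] [Module S M] [SMul R S] [IsScalarTower R S M]
    (p : Submodule S M) [Module.Projective R (M ⧸ p)] {x : M}
    (hx : ∀ f : Module.Dual R M, (∀ y ∈ p, f y = 0) → f x = 0) : x ∈ p := by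
  rw [← Submodule.Quotient.mk_eq_zero, ← Module.forall_dual_apply_eq_zero_iff R]
  intro φ
  refine hx (φ ∘ₗ p.mkQ.restrictScalars R) fun y hy => ?_
  simp [(Submodule.Quotient.mk_eq_zero p).2 hy]

namespace MonoidAlgebra

variable {k G : Type*} [CommSemiring k] [Group G] [Fintype G]

noncomputable def ofDual (f : Module.Dual k (MonoidAlgebra k G)) : MonoidAlgebra k G :=
  ∑ h : G, f (single h 1) • single h⁻¹ 1

theorem coeff_ofDual_mul (f : Module.Dual k (MonoidAlgebra k G)) (x : MonoidAlgebra k G)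
    (g : G) : (ofDual f * x).coeff g = f (x * single g⁻¹ 1) := by
  conv_rhs => rw [← sum_coeff_single (x * single g⁻¹ 1), Finsupp.sum_fintype _ _ (by simp)]
  simp only [ofDual, Finset.sum_mul, coeff_sum, Finsupp.finsetSum_apply, map_sum]
  refine Finset.sum_congr rfl fun h _ => ?_
  rw [smul_mul_assoc, coeff_smul_apply, smul_eq_mul, coeff_single_mul_apply,
    coeff_mul_single_apply, inv_inv, inv_inv, mul_one, one_mul, ← mul_one (x.coeff (h * g)),
    ← smul_single', map_smul, smul_eq_mul, mul_one, mul_comm]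

theorem coeff_one_ofDual_mul (f : Module.Dual k (MonoidAlgebra k G)) (x : MonoidAlgebra k G) :
    (ofDual f * x).coeff 1 = f x := by
  rw [coeff_ofDual_mul, inv_one, ← one_def, mul_one]

end MonoidAlgebra

theorem ofDual_mem_leftAnnihilator {O G : Type*} [CommRing O] [Group G] [Fintype G]
    {I : Submodule (MonoidAlgebra O G)ᵐᵒᵖ (MonoidAlgebra O G)}
    {f : Module.Dual O (MonoidAlgebra O G)} (hf : ∀ y ∈ I, f y = 0) :
    ofDual f ∈ leftAnnihilator O G I := fun x hx => by
  ext g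
  rw [coeff_ofDual_mul, ← op_smul_eq_mul, hf _ (I.smul_mem (op (single g⁻¹ 1)) hx), coeff_zero,
    Finsupp.zero_apply]

/-- If `I` is a saturated right ideal of `O[G]` (i.e. `O[G]/I`
is a projective `O`-module), then `I = {α : β·α = 0 for all β ∈ I^⊥}`. -/
theorem stmt_3 (O : Type*) [CommRing O] (G : Type*) [Group G] [Finite G]
    (I : Submodule (MonoidAlgebra O G)ᵐᵒᵖ (MonoidAlgebra O G))
    (hsat : Module.Projective O (MonoidAlgebra O G ⧸ I)) :
    ∀ α : MonoidAlgebra O G,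
      α ∈ I ↔ ∀ β ∈ leftAnnihilator O G I, β * α = 0 := by
  intro α
  refine ⟨fun hα β hβ => hβ α hα, fun h => ?_⟩
  have := Fintype.ofFinite G
  refine I.mem_of_forall_dual_eq_zero (R := O) fun f hf => ?_
  rw [← coeff_one_ofDual_mul, h _ (ofDual_mem_leftAnnihilator hf), coeff_zero, Finsupp.zero_apply]
end

section
/- Let O be a commutative ring, G a finite group, and I a saturated two-sided ideal of O[G]. Then the map sending α ∈ O[G] to left multiplication by α on I induces a well-defined ring isomorphism O[G]/I^⊥ ≅ End_{O[G]}(I), where End_{O[G]}(I) is the ring of endomorphisms of I as a right O[G]-module. Moreover, every homomorphism of right O[G]-modules from I to O[G] has image contained in I, so that End_{O[G]}(I) = Hom_{O[G]}(I, O[G]). -/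
/-! An `O`-linear retraction `π : O[G] → I` (it exists because `O[G]/I` is projective) turns a
right `O[G]`-linear `f : I → O[G]` into the `O`-linear functional `m ↦ (f (π m))(1)` on `O[G]`.
Since the trace pairing `(a, m) ↦ (a m)(1)` on `O[G]` is perfect, that functional is
`m ↦ (a m)(1)` for some `a`, and right `O[G]`-linearity moves every coefficient to the one at `1`,
so `f = a · _` on `I`. Hence `f` maps into `I` when `I` is two-sided, and left multiplication
`O[G] → End(I)` is onto; its kernel is `I^⊥` by definition. -/

open MonoidAlgebra MulOpposite

theorem Submodule.exists_linearRetraction_of_projective_quotient {R S M : Type*} [Semiring R]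
    [Ring S] [AddCommGroup M] [Module S M] [Module R M] [SMul R S] [IsScalarTower R S M]
    (p : Submodule S M) [Module.Projective R (M ⧸ p)] :
    ∃ π : M →ₗ[R] p, ∀ x : p, π x = x := by
  obtain ⟨s, hs⟩ := (p.mkQ.restrictScalars R).exists_rightInverse_of_surjective
    (LinearMap.range_eq_top.mpr p.mkQ_surjective)
  have hs' : ∀ q, p.mkQ (s q) = q := LinearMap.congr_fun hs
  have hmem : ∀ m, m - s (p.mkQ m) ∈ p := fun m => by
    rw [← Submodule.Quotient.mk_eq_zero, ← p.mkQ_apply, map_sub, hs', sub_self]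
  refine ⟨{ toFun := fun m => ⟨m - s (p.mkQ m), hmem m⟩
            map_add' := fun m n => Subtype.ext ?_
            map_smul' := fun c m => Subtype.ext ?_ }, fun x => Subtype.ext ?_⟩
  · simp only [map_add, Submodule.coe_add]; abel
  · have : p.mkQ (c • m) = c • p.mkQ m := (p.mkQ.restrictScalars R).map_smul c m
    simp only [this, map_smul, Submodule.coe_smul_of_tower, smul_sub, RingHom.id_apply]
  · simp [(Submodule.Quotient.mk_eq_zero p).mpr x.2]

namespace MonoidAlgebra

variable {O G : Type*}

theorem exists_coeff_one_mul_eq [CommSemiring O] [Group G] [Fintype G] (φ : O[G] →ₗ[O] O) :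
    ∃ a : O[G], ∀ m, (a * m).coeff 1 = φ m := by
  classical
  let a : O[G] := ∑ g, single g⁻¹ (φ (single g 1))
  suffices Finsupp.lapply 1 ∘ₗ (coeffLinearEquiv O).toLinearMap ∘ₗ LinearMap.mulLeft O a = φ from
    ⟨a, fun m => LinearMap.congr_fun this m⟩
  ext g
  simp [a, coeff_sum, Finsupp.single_apply]

theorem rightLinearMap_ext_coeff_one [Semiring O] [Group G] {M : Type*} [AddCommMonoid M]
    [Module O[G]ᵐᵒᵖ M] {f g : M →ₗ[O[G]ᵐᵒᵖ] O[G]} (h : ∀ x, (f x).coeff 1 = (g x).coeff 1) :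
    f = g := by
  ext x k
  have key : ∀ y : O[G], y.coeff k = (y * single k⁻¹ 1).coeff 1 := fun y => by simp
  simpa only [key, ← op_smul_eq_mul, ← map_smul] using h (op (single k⁻¹ 1) • x)

theorem exists_eq_mulLeft_of_projective_quotient [CommRing O] [Group G] [Finite G]
    (I : Submodule O[G]ᵐᵒᵖ O[G]) [Module.Projective O (O[G] ⧸ I)]
    (f : I →ₗ[O[G]ᵐᵒᵖ] O[G]) : ∃ a : O[G], f = LinearMap.mulLeft O[G]ᵐᵒᵖ a ∘ₗ I.subtype := by
  have : Fintype G := Fintype.ofFinite G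
  obtain ⟨π, hπ⟩ := I.exists_linearRetraction_of_projective_quotient (R := O)
  obtain ⟨a, ha⟩ := exists_coeff_one_mul_eq
    (Finsupp.lapply 1 ∘ₗ (coeffLinearEquiv O).toLinearMap ∘ₗ f.restrictScalars O ∘ₗ π)
  refine ⟨a, rightLinearMap_ext_coeff_one fun x => ?_⟩
  simp [ha, hπ]

end MonoidAlgebra

namespace Submodule

variable {A : Type*} [Ring A] (I : Submodule Aᵐᵒᵖ A) (hI : ∀ a, ∀ x ∈ I, a * x ∈ I)

noncomputable def mulLeftEnd : A →+* Module.End Aᵐᵒᵖ I where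
  toFun a := (LinearMap.mulLeft Aᵐᵒᵖ a).restrict (hI a)
  map_one' := LinearMap.ext fun x => Subtype.ext (one_mul (x : A))
  map_mul' a b := LinearMap.ext fun x => Subtype.ext (mul_assoc a b x)
  map_zero' := LinearMap.ext fun x => Subtype.ext (zero_mul (x : A))
  map_add' a b := LinearMap.ext fun x => Subtype.ext (add_mul a b x)

@[simp]
theorem coe_mulLeftEnd_apply (a : A) (x : I) : (I.mulLeftEnd hI a x : A) = a * x := rfl

theorem mulLeftEnd_eq_zero_iff (a : A) : I.mulLeftEnd hI a = 0 ↔ ∀ x ∈ I, a * x = 0 := by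
  simp [LinearMap.ext_iff, Subtype.ext_iff]

theorem mulLeftEnd_surjective
    (h : ∀ f : I →ₗ[Aᵐᵒᵖ] A, ∃ a, f = LinearMap.mulLeft Aᵐᵒᵖ a ∘ₗ I.subtype) :
    Function.Surjective (I.mulLeftEnd hI) := fun F => by
  obtain ⟨a, ha⟩ := h (I.subtype ∘ₗ F)
  exact ⟨a, LinearMap.ext fun x => Subtype.ext (LinearMap.congr_fun ha x).symm⟩

end Submodule

/-- If `I` is a saturated two-sided ideal of the group ring
`O[G]` (a right ideal, stable under left multiplication, with `O[G]/I`
projective over `O`), then `α ↦ (left multiplication by α on I)` is a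
surjective ring homomorphism `O[G] → End_{O[G]}(I)` whose kernel is exactly
`I^⊥`, i.e. it induces a ring isomorphism `O[G]/I^⊥ ≅ End_{O[G]}(I)`.
Moreover every right-`O[G]`-module homomorphism `I → O[G]` has image in `I`,
so `End_{O[G]}(I) = Hom_{O[G]}(I, O[G])`. -/
theorem stmt_4 (O : Type*) [CommRing O] (G : Type*) [Group G] [Finite G]
    (I : Submodule (MonoidAlgebra O G)ᵐᵒᵖ (MonoidAlgebra O G))
    (htwosided : ∀ (a : MonoidAlgebra O G), ∀ x ∈ I, a * x ∈ I)
    (hsat : Module.Projective O (MonoidAlgebra O G ⧸ I)) :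
    (∃ e : MonoidAlgebra O G →+* Module.End (MonoidAlgebra O G)ᵐᵒᵖ I,
      (∀ (α : MonoidAlgebra O G) (x : I), (e α x : MonoidAlgebra O G) = α * x) ∧
      Function.Surjective e ∧
      (∀ α : MonoidAlgebra O G, e α = 0 ↔ α ∈ leftAnnihilator O G I)) ∧
    (∀ f : I →ₗ[(MonoidAlgebra O G)ᵐᵒᵖ] MonoidAlgebra O G, ∀ x : I, f x ∈ I) := by
  have hmulLeft := MonoidAlgebra.exists_eq_mulLeft_of_projective_quotient I
  refine ⟨⟨I.mulLeftEnd htwosided, I.coe_mulLeftEnd_apply htwosided,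
    I.mulLeftEnd_surjective htwosided hmulLeft, I.mulLeftEnd_eq_zero_iff htwosided⟩, fun f x => ?_⟩
  obtain ⟨a, rfl⟩ := hmulLeft f
  exact htwosided a x x.2
end

section
/- Let r be a positive integer and let R := Z[X]/(X^r − 1). Write φ and ψ for the images in R of Φ_r(X) and Ψ_r(X) respectively. Then the annihilator in R of the principal ideal ψ·R is the principal ideal φ·R, and the annihilator in R of the principal ideal φ·R is the principal ideal ψ·R. -/
open Polynomial

noncomputable section

/-- `Ψ_r(X) := (X^r − 1)/Φ_r(X) ∈ ℤ[X]`. -/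
def PsiPoly (r : ℕ) : ℤ[X] := (X ^ r - 1) /ₘ cyclotomic r ℤ

/-
If `f * g = h` with `g` a non-zero-divisor, then in `R ⧸ (h)` an element `x = [p]` kills `[g]`
exactly when `f * g ∣ p * g`, i.e. when `f ∣ p`, i.e. when `x ∈ ([f])`. Over `ℤ[X]` apply this to
`Φ_r * Ψ_r = X ^ r - 1` in both orders; both factors are nonzero since `X ^ r - 1 ≠ 0` for `r > 0`.
-/

namespace Ideal

variable {R : Type*} [CommRing R]

theorem annihilator_span_mk_eq_span_mk_of_mul_eq {f g h : R} (hg : g ∈ nonZeroDivisors R)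
    (hfg : f * g = h) :
    (span {Quotient.mk (span {h}) g}).annihilator = span {Quotient.mk (span {h}) f} := by
  have hle : span {h} ≤ span {f} := span_singleton_le_span_singleton.mpr ⟨g, hfg.symm⟩
  ext x
  obtain ⟨p, rfl⟩ := Quotient.mk_surjective x
  rw [span, Submodule.mem_annihilator_span_singleton, smul_eq_mul,
    ← map_mul, Quotient.eq_zero_iff_mem, mem_span_singleton, ← hfg,
    dvd_cancel_right_mem_nonZeroDivisors hg, ← mem_span_singleton, hfg,
    ← mem_quotient_iff_mem hle, map_span, Set.image_singleton]

end Ideal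

theorem cyclotomic_mul_PsiPoly (r : ℕ) : cyclotomic r ℤ * PsiPoly r = X ^ r - 1 := by
  conv_rhs => rw [← modByMonic_add_div (X ^ r - 1 : ℤ[X]) (cyclotomic r ℤ)]
  rw [(modByMonic_eq_zero_iff_dvd (cyclotomic.monic r ℤ)).mpr (cyclotomic.dvd_X_pow_sub_one r ℤ),
    zero_add, PsiPoly]

theorem PsiPoly_ne_zero {r : ℕ} (hr : 0 < r) : PsiPoly r ≠ 0 :=
  right_ne_zero_of_mul <| (cyclotomic_mul_PsiPoly r).trans_ne <| by
    simpa using X_pow_sub_C_ne_zero hr (1 : ℤ)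

/-- In `R := ℤ[X]/(X^r − 1)`, with `φ` and `ψ` the images of
`Φ_r` and `Ψ_r`, the annihilator of the ideal `(ψ)` is the ideal `(φ)`, and
the annihilator of the ideal `(φ)` is the ideal `(ψ)`. -/
theorem stmt_6 (r : ℕ) (hr : 0 < r) :
    let R := ℤ[X] ⧸ Ideal.span {(X : ℤ[X]) ^ r - 1}
    let mk : ℤ[X] →+* R := Ideal.Quotient.mk (Ideal.span {(X : ℤ[X]) ^ r - 1})
    let φ : R := mk (cyclotomic r ℤ)
    let ψ : R := mk (PsiPoly r)
    (Ideal.span {ψ} : Ideal R).annihilator = Ideal.span {φ} ∧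
    (Ideal.span {φ} : Ideal R).annihilator = Ideal.span {ψ} :=
  ⟨Ideal.annihilator_span_mk_eq_span_mk_of_mul_eq
      (mem_nonZeroDivisors_of_ne_zero (PsiPoly_ne_zero hr)) (cyclotomic_mul_PsiPoly r),
    Ideal.annihilator_span_mk_eq_span_mk_of_mul_eq
      (mem_nonZeroDivisors_of_ne_zero (cyclotomic_ne_zero r ℤ))
      ((mul_comm _ _).trans (cyclotomic_mul_PsiPoly r))⟩

end
end

section
/- Let r be a positive integer, let ζ_r be a primitive r-th root of unity, and let O_r := Z[ζ_r] be the ring of integers of the r-th cyclotomic field Q(ζ_r). Then the element Ψ_r(ζ_r) generates the same ideal of O_r as the product ∏_{ℓ} (ζ_r^{r/ℓ} − 1), where ℓ runs over the primes dividing r (note that each ζ_r^{r/ℓ} is a primitive ℓ-th root of unity). -/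
/-!
Since `X ^ r - 1 = ∏_{d ∣ r} Φ_d`, we have `Ψ_r(ζ) = ∏_{d ∣ r, d < r} Φ_d(ζ)` and
`ζ^{r/ℓ} - 1 = ∏_{d ∣ r/ℓ} Φ_d(ζ)`. The factor `Φ_d(ζ)` divides `ζ^d - 1`, where `ζ^d` is a
primitive `(r/d)`-th root of unity; when `r/d > 1` is not a prime power, `Φ_{r/d}(1) = 1` forces
`ζ^d - 1` to be a unit. Up to units both sides are therefore the product of the `Φ_d(ζ)` with
`r/d` a power of a prime `ℓ`, and these are exactly the `d ∣ r/ℓ` with `r/d` a prime power.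
-/

open Polynomial

noncomputable section

theorem PsiPoly_eq_prod_cyclotomic {r : ℕ} (hr : 0 < r) :
    PsiPoly r = ∏ d ∈ r.properDivisors, cyclotomic d ℤ := by
  have h := prod_cyclotomic_eq_X_pow_sub_one hr ℤ
  rw [← Nat.cons_self_properDivisors hr.ne', Finset.prod_cons] at h
  rw [PsiPoly, ← h, mul_divByMonic_cancel_left _ (cyclotomic.monic r ℤ)]

theorem IsPrimePow.minFac_eq_of_dvd {p n : ℕ} (hn : IsPrimePow n) (hp : p.Prime) (hpn : p ∣ n) :
    n.minFac = p :=
  (isPrimePow_iff_unique_prime_dvd.mp hn).unique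
    ⟨Nat.minFac_prime hn.ne_one, Nat.minFac_dvd n⟩ ⟨hp, hpn⟩

namespace Nat

theorem mem_divisors_div_iff {r p d : ℕ} (hr : r ≠ 0) (hpr : p ∣ r) :
    d ∈ (r / p).divisors ↔ d ∣ r ∧ p ∣ r / d := by
  have hrp : r / p ≠ 0 := (div_ne_zero_iff_of_dvd hpr).mpr ⟨hr, ne_zero_of_dvd_ne_zero hr hpr⟩
  rw [mem_divisors, and_iff_left hrp, dvd_div_iff_mul_dvd hpr]
  constructor
  · intro h
    have hdr : d ∣ r := (dvd_mul_left d p).trans h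
    exact ⟨hdr, (dvd_div_iff_mul_dvd hdr).mpr (by rwa [mul_comm])⟩
  · rintro ⟨hdr, hpd⟩
    rw [mul_comm]
    exact (dvd_div_iff_mul_dvd hdr).mp hpd

theorem divisors_div_subset_properDivisors {r p : ℕ} (hr : r ≠ 0) (hp : 1 < p) (hpr : p ∣ r) :
    (r / p).divisors ⊆ r.properDivisors := fun _ hd =>
  mem_properDivisors.mpr ⟨(mem_divisors.mp hd).1.trans (div_dvd_of_dvd hpr),
    (divisor_le hd).trans_lt (div_lt_self (pos_of_ne_zero hr) hp)⟩

theorem prod_properDivisors_eq_prod_primeFactors_prod_divisors_div {M : Type*} [CommMonoid M]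
    {r : ℕ} (f : ℕ → M) (hf : ∀ d ∈ r.properDivisors, ¬IsPrimePow (r / d) → f d = 1) :
    ∏ d ∈ r.properDivisors, f d = ∏ p ∈ r.primeFactors, ∏ d ∈ (r / p).divisors, f d := by
  classical
  -- Both sides are the product over `S`; the right one groups it by the prime `(r / d).minFac`.
  set S := r.properDivisors.filter (fun d => IsPrimePow (r / d))
  have hS : ∏ d ∈ r.properDivisors, f d = ∏ d ∈ S, f d :=
    (Finset.prod_filter_of_ne fun d hd h => not_not.mp (mt (hf d hd) h)).symm
  have hfiber : ∀ p ∈ r.primeFactors,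
      ∏ d ∈ (r / p).divisors, f d = ∏ d ∈ S with (r / d).minFac = p, f d := by
    intro p hp
    obtain ⟨hp, hpr, hr⟩ := mem_primeFactors.mp hp
    have hsub := divisors_div_subset_properDivisors hr hp.one_lt hpr
    have hset : (r / p).divisors.filter (fun d => IsPrimePow (r / d)) =
        S.filter (fun d => (r / d).minFac = p) := by
      ext d
      simp only [S, Finset.mem_filter]
      constructor
      · rintro ⟨hd, hpp⟩
        exact ⟨⟨hsub hd, hpp⟩, hpp.minFac_eq_of_dvd hp ((mem_divisors_div_iff hr hpr).mp hd).2⟩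
      · rintro ⟨⟨hd, hpp⟩, hmin⟩
        exact ⟨(mem_divisors_div_iff hr hpr).mpr
          ⟨(mem_properDivisors.mp hd).1, hmin ▸ minFac_dvd _⟩, hpp⟩
    rw [← Finset.prod_filter_of_ne fun d hd h => not_not.mp (mt (hf d (hsub hd)) h), hset]
  rw [hS, Finset.prod_congr rfl hfiber, Finset.prod_fiberwise_of_maps_to]
  intro d hd
  obtain ⟨hd, hpp⟩ := Finset.mem_filter.mp hd
  obtain ⟨hdr, hlt⟩ := mem_properDivisors.mp hd
  exact mem_primeFactors.mpr ⟨minFac_prime hpp.ne_one, (minFac_dvd _).trans (div_dvd_of_dvd hdr),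
    by omega⟩

end Nat

theorem prod_divisors_aeval_cyclotomic {R : Type*} [CommRing R] (ζ : R) {n : ℕ} (hn : 0 < n) :
    ∏ d ∈ n.divisors, aeval ζ (cyclotomic d ℤ) = ζ ^ n - 1 := by
  rw [← map_prod, prod_cyclotomic_eq_X_pow_sub_one hn]
  simp

namespace IsPrimitiveRoot

variable {R : Type*} [CommRing R] [IsDomain R]

theorem isUnit_sub_one_of_not_isPrimePow {ω : R} {m : ℕ} (hω : IsPrimitiveRoot ω m) (hm : 1 < m)
    (hpp : ¬IsPrimePow m) : IsUnit (ω - 1) := by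
  have hroot : eval ω (cyclotomic m R) = 0 := hω.isRoot_cyclotomic (by omega)
  have hone : eval 1 (cyclotomic m R) = 1 := by
    refine eval_one_cyclotomic_not_prime_pow fun {p} hp k hk => ?_
    rcases k.eq_zero_or_pos with rfl | hk0
    · rw [pow_zero] at hk
      omega
    · exact hpp ⟨p, k, hp.prime, hk0, hk⟩
  have hdvd := sub_dvd_eval_sub ω 1 (cyclotomic m R)
  rw [hroot, hone, zero_sub] at hdvd
  exact isUnit_of_dvd_unit hdvd isUnit_one.neg

theorem isUnit_aeval_cyclotomic_of_not_isPrimePow {ζ : R} {r d : ℕ} (hζ : IsPrimitiveRoot ζ r)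
    (hd : d ∈ r.properDivisors) (hpp : ¬IsPrimePow (r / d)) :
    IsUnit (aeval ζ (cyclotomic d ℤ)) := by
  obtain ⟨hdr, hlt⟩ := Nat.mem_properDivisors.mp hd
  have hd0 : 0 < d := Nat.pos_of_dvd_of_pos hdr (by omega)
  have hrd : 1 < r / d := (Nat.lt_div_iff_mul_lt' hdr 1).mpr (by omega)
  have hunit : IsUnit (ζ ^ d - 1) :=
    (hζ.pow_of_dvd hd0.ne' hdr).isUnit_sub_one_of_not_isPrimePow hrd hpp
  refine isUnit_of_dvd_unit ?_ hunit
  rw [← prod_divisors_aeval_cyclotomic ζ hd0]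
  exact Finset.dvd_prod_of_mem _ (Nat.mem_divisors_self d hd0.ne')

theorem associated_aeval_PsiPoly_prod_primeFactors {ζ : R} {r : ℕ} (hζ : IsPrimitiveRoot ζ r)
    (hr : 0 < r) :
    Associated (aeval ζ (PsiPoly r)) (∏ ℓ ∈ r.primeFactors, (ζ ^ (r / ℓ) - 1)) := by
  rw [← Associates.mk_eq_mk_iff_associated, PsiPoly_eq_prod_cyclotomic hr, map_prod,
    ← Associates.finsetProd_mk, ← Associates.finsetProd_mk,
    Nat.prod_properDivisors_eq_prod_primeFactors_prod_divisors_div]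
  · refine Finset.prod_congr rfl fun p hp => ?_
    rw [Associates.finsetProd_mk, prod_divisors_aeval_cyclotomic ζ
      (Nat.div_pos (Nat.le_of_mem_primeFactors hp) (Nat.prime_of_mem_primeFactors hp).pos)]
  · exact fun d hd hpp =>
      Associates.mk_eq_one.mpr (hζ.isUnit_aeval_cyclotomic_of_not_isPrimePow hd hpp)

end IsPrimitiveRoot

theorem stmt_7_general (r : ℕ) (hr : 0 < r) (K : Type*) [Field K]
    (ζ : K) (hζ : IsPrimitiveRoot ζ r) :
    let O := Algebra.adjoin ℤ ({ζ} : Set K)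
    let z : O := ⟨ζ, Algebra.subset_adjoin rfl⟩
    (Ideal.span {Polynomial.aeval z (PsiPoly r)} : Ideal O) =
      Ideal.span {∏ ℓ ∈ r.primeFactors, (z ^ (r / ℓ) - 1)} := by
  intro O z
  have hz : IsPrimitiveRoot z r :=
    (IsPrimitiveRoot.map_iff_of_injective (f := O.val) Subtype.val_injective).mp hζ
  exact Ideal.span_singleton_eq_span_singleton.mpr
    (hz.associated_aeval_PsiPoly_prod_primeFactors hr)

/-- Let `ζ` be a primitive `r`-th root of unity (in a field of
characteristic zero) and let `O_r := ℤ[ζ]` be the ring of integers of the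
`r`-th cyclotomic field, i.e. the subring generated by `ζ`.  Then `Ψ_r(ζ)`
generates the same ideal of `O_r` as `∏_{ℓ prime, ℓ ∣ r} (ζ^{r/ℓ} − 1)`. -/
theorem stmt_7 (r : ℕ) (hr : 0 < r) (K : Type*) [Field K] [CharZero K]
    (ζ : K) (hζ : IsPrimitiveRoot ζ r) :
    let O := Algebra.adjoin ℤ ({ζ} : Set K)
    let z : O := ⟨ζ, Algebra.subset_adjoin rfl⟩
    (Ideal.span {Polynomial.aeval z (PsiPoly r)} : Ideal O) =
      Ideal.span {∏ ℓ ∈ r.primeFactors, (z ^ (r / ℓ) - 1)} :=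
  stmt_7_general r hr K ζ hζ

end
end

section
/- Let r be a positive integer. In the ring Z[X]/(X^r − 1), the ideal generated by (the image of) Φ_r(X) is equal to the ideal generated by the set {(X^r − 1)/(X^d − 1) : d a divisor of r, d ≠ r}, and is also equal to the ideal generated by the subset {(X^r − 1)/(X^{r/ℓ} − 1) : ℓ a prime dividing r}. (Here (X^r − 1)/(X^d − 1) ∈ Z[X] for every divisor d of r.) -/
/-!
Over `ℤ`, `X ^ r - 1 = Φ_r · ∏_{e ∣ r, e < r} Φ_e`, and for `d ∣ r`, `d ≠ r`, the quotient
`(X ^ r - 1) / (X ^ d - 1)` is `Φ_r · ∏ Φ_e` over the proper divisors `e` of `r` not dividing `d`.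
So every generator lies in `(Φ_r)`, and the converse inclusion reduces to the comaximality in
`ℤ[X]` of the cofactors of `Φ_r` in `X ^ r - 1` and in the `(X ^ r - 1) / (X ^ (r / ℓ) - 1)`.
If a maximal ideal `m` contained them all, the image `ζ` of `X` in the field `ℤ[X] ⧸ m` would be
a root of some `Φ_e` for each cofactor. Any such `e` has the same prime-to-`p` part, namely
`orderOf ζ`, where `p` is the characteristic; comparing `ℓ`-adic valuations then forces one of
these proper divisors `e` to equal `r`.
-/

open Polynomial

namespace Nat

theorem factorization_le_of_dvd_of_not_dvd_div {r e ℓ : ℕ} (he : e ∣ r) (hℓ : ¬ e ∣ r / ℓ) :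
    r.factorization ℓ ≤ e.factorization ℓ := by
  obtain ⟨k, rfl⟩ := he
  have hk : ¬ ℓ ∣ k := by
    rintro ⟨j, rfl⟩
    rcases eq_or_ne ℓ 0 with rfl | hℓ0
    · simp at hℓ
    · exact hℓ ⟨j, by rw [mul_left_comm, Nat.mul_div_cancel_left _ (Nat.pos_of_ne_zero hℓ0)]⟩
  have he0 : e ≠ 0 := by rintro rfl; simp at hℓ
  have hk0 : k ≠ 0 := by rintro rfl; simp at hk
  simp [factorization_mul he0 hk0, factorization_eq_zero_of_not_dvd hk]

theorem mem_of_forall_prime_exists_not_dvd_div {r p n : ℕ} {S : Set ℕ} (hr : r ≠ 0)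
    (hSr : ∀ e ∈ S, e ∣ r) (hSn : ∀ e ∈ S, ordCompl[p] e = n) (hS : S.Nonempty)
    (hcover : ∀ ℓ, ℓ.Prime → ℓ ∣ r → ∃ e ∈ S, ¬ e ∣ r / ℓ) : r ∈ S := by
  have hval : ∀ e ∈ S, ∀ ℓ ≠ p, r.factorization ℓ ≤ e.factorization ℓ := by
    intro e he ℓ hℓp
    by_cases hℓ : ℓ.Prime ∧ ℓ ∣ r
    · obtain ⟨e', he', hnd⟩ := hcover ℓ hℓ.1 hℓ.2
      have hcompl : ordCompl[p] e' = ordCompl[p] e := (hSn e' he').trans (hSn e he).symm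
      calc r.factorization ℓ ≤ e'.factorization ℓ :=
            factorization_le_of_dvd_of_not_dvd_div (hSr e' he') hnd
        _ = e.factorization ℓ := by
          simpa [factorization_ordCompl, Finsupp.erase_ne hℓp] using
            congrArg (·.factorization ℓ) hcompl
    · simp [(factorization_eq_zero_iff r ℓ).mpr (by tauto)]
  obtain ⟨e, he, hpe⟩ : ∃ e ∈ S, r.factorization p ≤ e.factorization p := by
    by_cases hp : p.Prime ∧ p ∣ r
    · obtain ⟨e, he, hnd⟩ := hcover p hp.1 hp.2
      exact ⟨e, he, factorization_le_of_dvd_of_not_dvd_div (hSr e he) hnd⟩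
    · obtain ⟨e, he⟩ := hS
      exact ⟨e, he, by simp [(factorization_eq_zero_iff r p).mpr (by tauto)]⟩
  have hre : r ∣ e := by
    refine (factorization_le_iff_dvd hr (ne_zero_of_dvd_ne_zero hr (hSr e he))).mp fun ℓ => ?_
    rcases eq_or_ne ℓ p with rfl | hℓp
    exacts [hpe, hval e he ℓ hℓp]
  rwa [← dvd_antisymm (hSr e he) hre]

end Nat

theorem orderOf_eq_ordCompl_ringChar_of_isRoot_cyclotomic {K : Type*} [Field K] {e : ℕ}
    (he : e ≠ 0) {ζ : K} (h : (cyclotomic e K).IsRoot ζ) :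
    orderOf ζ = ordCompl[ringChar K] e := by
  rcases CharP.char_is_prime_or_zero K (ringChar K) with hp | hp
  · have : Fact (ringChar K).Prime := ⟨hp⟩
    have : NeZero ((ordCompl[ringChar K] e : ℕ) : K) :=
      NeZero.of_not_dvd K (Nat.not_dvd_ordCompl hp he)
    rw [← Nat.ordProj_mul_ordCompl_eq_self e (ringChar K)] at h
    exact (isRoot_cyclotomic_prime_pow_mul_iff_of_charP.mp h).eq_orderOf.symm
  · have : CharP K 0 := hp ▸ ringChar.charP K
    have : CharZero K := CharP.charP_to_charZero K
    have : NeZero (e : K) := ⟨Nat.cast_ne_zero.mpr he⟩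
    -- `ordCompl[0] e = e`, because `0` is not prime and so `e.factorization 0 = 0`.
    simpa [hp, Nat.factorization_zero_right] using (isRoot_cyclotomic_iff.mp h).eq_orderOf.symm

theorem Ideal.map_mk_span_insert {R : Type*} [CommRing R] (a : R) (S : Set R) :
    (Ideal.span (insert a S)).map (Ideal.Quotient.mk (Ideal.span {a})) =
      Ideal.span (Ideal.Quotient.mk (Ideal.span {a}) '' S) := by
  rw [Ideal.map_span, Set.image_insert_eq, Ideal.span_insert,
    Ideal.Quotient.eq_zero_iff_mem.mpr (Ideal.mem_span_singleton_self a),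
    Ideal.span_singleton_eq_bot.mpr rfl, bot_sup_eq]

namespace Polynomial

theorem X_pow_sub_one_eq_cyclotomic_mul_prod_properDivisors (R : Type*) [CommRing R] {r : ℕ}
    (hr : r ≠ 0) :
    (X ^ r - 1 : R[X]) = cyclotomic r R * ∏ e ∈ r.properDivisors, cyclotomic e R := by
  rw [← prod_cyclotomic_eq_X_pow_sub_one (Nat.pos_of_ne_zero hr),
    ← Nat.insert_self_properDivisors hr, Finset.prod_insert Nat.self_notMem_properDivisors]

theorem X_pow_sub_one_divByMonic_eq_cyclotomic_mul_prod (R : Type*) [CommRing R] {r d : ℕ}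
    (hr : r ≠ 0) (hd : d ∣ r) (hdr : d ≠ r) :
    (X ^ r - 1 : R[X]) /ₘ (X ^ d - 1) =
      cyclotomic r R * ∏ e ∈ r.properDivisors \ d.divisors, cyclotomic e R := by
  have hd0 : d ≠ 0 := ne_zero_of_dvd_ne_zero hr hd
  have hrd : r ∉ d.divisors := fun h => hdr (Nat.dvd_antisymm hd (Nat.dvd_of_mem_divisors h))
  rw [← X_pow_sub_one_mul_prod_cyclotomic_eq_X_pow_sub_one_of_dvd R hd hr,
    mul_divByMonic_cancel_left _ (by simpa using monic_X_pow_sub_C (1 : R) hd0),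
    ← Nat.insert_self_properDivisors hr, Finset.insert_sdiff_of_notMem _ hrd,
    Finset.prod_insert fun h => Nat.self_notMem_properDivisors (Finset.mem_sdiff.mp h).1]

theorem cyclotomic_dvd_X_pow_sub_one_divByMonic (R : Type*) [CommRing R] {r d : ℕ}
    (hr : r ≠ 0) (hd : d ∣ r) (hdr : d ≠ r) :
    cyclotomic r R ∣ (X ^ r - 1 : R[X]) /ₘ (X ^ d - 1) := by
  rw [X_pow_sub_one_divByMonic_eq_cyclotomic_mul_prod R hr hd hdr]
  exact dvd_mul_right _ _

theorem span_prod_cyclotomic_properDivisors_eq_top {r : ℕ} (hr : r ≠ 0) :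
    Ideal.span (insert (∏ e ∈ r.properDivisors, cyclotomic e ℤ)
      ((fun ℓ => ∏ e ∈ r.properDivisors \ (r / ℓ).divisors, cyclotomic e ℤ) ''
        {ℓ | ℓ.Prime ∧ ℓ ∣ r})) = ⊤ := by
  by_contra hT
  obtain ⟨m, hm, hle⟩ := Ideal.exists_le_maximal _ hT
  let := Ideal.Quotient.field m
  set ζ : ℤ[X] ⧸ m := Ideal.Quotient.mkₐ ℤ m X
  have hroot (s : Finset ℕ) (hs : ∏ e ∈ s, cyclotomic e ℤ ∈ m) :
      ∃ e ∈ s, (cyclotomic e (ℤ[X] ⧸ m)).IsRoot ζ := by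
    have : aeval ζ (∏ e ∈ s, cyclotomic e ℤ) = 0 := by
      rw [aeval_algHom_apply (Ideal.Quotient.mkₐ ℤ m), aeval_X_left_apply]
      exact Ideal.Quotient.eq_zero_iff_mem.mpr hs
    obtain ⟨e, he, h0⟩ := Finset.prod_eq_zero_iff.mp (by rwa [map_prod] at this)
    exact ⟨e, he, by rwa [aeval_def, ← eval_map, map_cyclotomic] at h0⟩
  let S : Set ℕ := {e | e ∈ r.properDivisors ∧ (cyclotomic e (ℤ[X] ⧸ m)).IsRoot ζ}
  have hSr : ∀ e ∈ S, e ∣ r := fun e he => (Nat.mem_properDivisors.mp he.1).1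
  refine Nat.self_notMem_properDivisors
    (Nat.mem_of_forall_prime_exists_not_dvd_div (p := ringChar (ℤ[X] ⧸ m)) (n := orderOf ζ)
      hr hSr (fun e he => ?_) ?_ fun ℓ hℓ hℓr => ?_ : r ∈ S).1
  · exact (orderOf_eq_ordCompl_ringChar_of_isRoot_cyclotomic
      (ne_zero_of_dvd_ne_zero hr (hSr e he)) he.2).symm
  · exact hroot _ (hle (Ideal.subset_span (Set.mem_insert _ _)))
  · obtain ⟨e, he, hroot⟩ :=
      hroot _ (hle (Ideal.subset_span (Set.mem_insert_of_mem _ ⟨ℓ, ⟨hℓ, hℓr⟩, rfl⟩)))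
    have hrℓ : r / ℓ ≠ 0 := (Nat.div_pos (Nat.le_of_dvd (Nat.pos_of_ne_zero hr) hℓr) hℓ.pos).ne'
    rw [Finset.mem_sdiff, Nat.mem_divisors, not_and_or, not_not] at he
    exact ⟨e, ⟨he.1, hroot⟩, he.2.resolve_right hrℓ⟩

theorem span_cyclotomic_eq_span_X_pow_sub_one_divByMonic {r : ℕ} (hr : r ≠ 0) :
    Ideal.span {cyclotomic r ℤ} = Ideal.span (insert (X ^ r - 1)
      ((fun ℓ => (X ^ r - 1 : ℤ[X]) /ₘ (X ^ (r / ℓ) - 1)) '' {ℓ | ℓ.Prime ∧ ℓ ∣ r})) := by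
  rw [← Ideal.mul_top (Ideal.span {cyclotomic r ℤ}),
    ← span_prod_cyclotomic_properDivisors_eq_top hr, Ideal.span_mul_span',
    Set.singleton_mul, Set.image_insert_eq, Set.image_image,
    ← X_pow_sub_one_eq_cyclotomic_mul_prod_properDivisors ℤ hr]
  congr 2
  refine Set.image_congr fun ℓ ⟨hℓ, hℓr⟩ => ?_
  exact (X_pow_sub_one_divByMonic_eq_cyclotomic_mul_prod ℤ hr (Nat.div_dvd_of_dvd hℓr)
    (Nat.div_lt_self (Nat.pos_of_ne_zero hr) hℓ.one_lt).ne).symm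

end Polynomial

/-- In `ℤ[X]/(X^r − 1)` the ideal generated by (the image of)
`Φ_r(X)` equals the ideal generated by
`{(X^r − 1)/(X^d − 1) : d ∣ r, d ≠ r}`, and also equals the ideal generated
by `{(X^r − 1)/(X^{r/ℓ} − 1) : ℓ prime, ℓ ∣ r}`. -/
theorem stmt_8 (r : ℕ) (hr : 0 < r) :
    let R := ℤ[X] ⧸ Ideal.span {(X : ℤ[X]) ^ r - 1}
    let mk : ℤ[X] →+* R := Ideal.Quotient.mk (Ideal.span {(X : ℤ[X]) ^ r - 1})
    (Ideal.span {mk (cyclotomic r ℤ)} =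
      Ideal.span
        ((fun d : ℕ => mk ((X ^ r - 1) /ₘ (X ^ d - 1))) ''
          {d : ℕ | d ∣ r ∧ d ≠ r})) ∧
    (Ideal.span {mk (cyclotomic r ℤ)} =
      Ideal.span
        ((fun ℓ : ℕ => mk ((X ^ r - 1) /ₘ (X ^ (r / ℓ) - 1))) ''
          {ℓ : ℕ | ℓ.Prime ∧ ℓ ∣ r})) := by
  intro R mk
  set Sd := (fun d => (X ^ r - 1 : ℤ[X]) /ₘ (X ^ d - 1)) '' {d | d ∣ r ∧ d ≠ r}
  set Sp := (fun ℓ => (X ^ r - 1 : ℤ[X]) /ₘ (X ^ (r / ℓ) - 1)) '' {ℓ | ℓ.Prime ∧ ℓ ∣ r}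
  have hSp : Ideal.span {cyclotomic r ℤ} = Ideal.span (insert (X ^ r - 1) Sp) :=
    span_cyclotomic_eq_span_X_pow_sub_one_divByMonic hr.ne'
  have hSpd : Sp ⊆ Sd := by
    rintro _ ⟨ℓ, ⟨hℓ, hℓr⟩, rfl⟩
    exact ⟨r / ℓ, ⟨Nat.div_dvd_of_dvd hℓr, (Nat.div_lt_self hr hℓ.one_lt).ne⟩, rfl⟩
  have hSd : Ideal.span (insert (X ^ r - 1) Sd) ≤ Ideal.span {cyclotomic r ℤ} := by
    rw [Ideal.span_le, Set.insert_subset_iff]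
    refine ⟨Ideal.mem_span_singleton.mpr (cyclotomic.dvd_X_pow_sub_one r ℤ), ?_⟩
    rintro _ ⟨d, ⟨hd, hdr⟩, rfl⟩
    exact Ideal.mem_span_singleton.mpr (cyclotomic_dvd_X_pow_sub_one_divByMonic ℤ hr.ne' hd hdr)
  have hmap {S : Set ℤ[X]}
      (h : Ideal.span {cyclotomic r ℤ} = Ideal.span (insert (X ^ r - 1) S)) :
      Ideal.span {mk (cyclotomic r ℤ)} = Ideal.span (mk '' S) := by
    have := congrArg (Ideal.map mk) h
    rwa [Ideal.map_mk_span_insert, Ideal.map_span, Set.image_singleton] at this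
  refine ⟨?_, by simpa only [Sp, Set.image_image] using hmap hSp⟩
  have hSd' : Ideal.span {cyclotomic r ℤ} = Ideal.span (insert (X ^ r - 1) Sd) :=
    le_antisymm (hSp ▸ Ideal.span_mono (Set.insert_subset_insert hSpd)) hSd
  simpa only [Sd, Set.image_image] using hmap hSd'
end

section
/- Let G be a finite cyclic group of order r with generator τ. Then the following three ideals of the (commutative) group ring Z[G] coincide: the ideal generated by Φ_r(τ); the ideal generated by the set {N_H : H a nontrivial subgroup of G}; and the ideal generated by the set {N_H : H a subgroup of G of prime order}. -/
open Polynomial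

noncomputable section

/-- The norm element `N_H := ∑_{h ∈ H} h` of a subgroup `H`, in the group
ring `ℤ[G]`. -/
def normElt {G : Type*} [CommGroup G] (H : Subgroup G) : MonoidAlgebra ℤ G :=
  ∑ᶠ h ∈ (H : Set G), MonoidAlgebra.of ℤ G h

private instance : IsJacobsonRing ℤ := by
  rw [isJacobsonRing_iff_prime_eq]
  intro P hP
  rcases eq_or_ne P ⊥ with rfl | hPne
  · refine le_antisymm ?_ Ideal.le_jacobson
    intro x hx
    rw [Submodule.mem_bot]
    by_contra hx0
    obtain ⟨p, hplt, hp⟩ := Nat.exists_infinite_primes (x.natAbs + 1)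
    have hirr : Irreducible ((p : ℤ)) :=
      (Int.prime_iff_natAbs_prime.mpr (by simpa using hp)).irreducible
    have hmax : (Ideal.span {(p : ℤ)}).IsMaximal :=
      PrincipalIdealRing.isMaximal_of_irreducible hirr
    have hmem : x ∈ Ideal.span {(p : ℤ)} := Ideal.mem_sInf.mp hx ⟨bot_le, hmax⟩
    rw [Ideal.mem_span_singleton] at hmem
    have h1 : p ∣ x.natAbs := Int.natCast_dvd.mp hmem
    have h2 : p ≤ x.natAbs := Nat.le_of_dvd (Int.natAbs_pos.mpr hx0) h1
    omega
  · haveI hmax : P.IsMaximal := IsPrime.to_maximal_ideal hPne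
    exact le_antisymm (sInf_le ⟨le_rfl, hmax⟩) Ideal.le_jacobson

private lemma normElt_zpowers {G : Type*} [CommGroup G] [Fintype G] (σ : G) :
    normElt (Subgroup.zpowers σ) =
      ∑ j ∈ Finset.range (orderOf σ), (MonoidAlgebra.of ℤ G σ) ^ j := by
  classical
  have h1 : ((Subgroup.zpowers σ : Subgroup G) : Set G) =
      ↑((Finset.range (orderOf σ)).image (σ ^ ·)) := by
    ext x
    simp only [Finset.coe_image, Finset.coe_range, Set.mem_image, Set.mem_Iio,
      SetLike.mem_coe]
    constructor
    · intro hx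
      obtain ⟨n, rfl⟩ :=
        ((isOfFinOrder_of_finite σ).mem_powers_iff_mem_zpowers).mpr hx
      exact ⟨n % orderOf σ, Nat.mod_lt _ (orderOf_pos σ), pow_mod_orderOf ..⟩
    · rintro ⟨j, -, rfl⟩
      exact zpow_natCast σ j ▸ Subgroup.zpow_mem _ (Subgroup.mem_zpowers σ) (j : ℤ)
  rw [normElt, h1, finsum_mem_coe_finset,
    Finset.sum_image (fun i hi j hj h =>
      pow_injOn_Iio_orderOf (by simpa using hi) (by simpa using hj) h)]
  exact Finset.sum_congr rfl fun j _ => map_pow (MonoidAlgebra.of ℤ G) σ j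

private lemma cyclotomic_dvd_geom_sum {r k d : ℕ} (hr : r ≠ 0) (hk : ¬ r ∣ k)
    (hrkd : r ∣ k * d) :
    cyclotomic r ℤ ∣ ∑ j ∈ Finset.range d, (X : ℤ[X]) ^ (k * j) := by
  have hprime : Prime (cyclotomic r ℤ) :=
    (UniqueFactorizationMonoid.irreducible_iff_prime).mp
      (cyclotomic.irreducible (Nat.pos_of_ne_zero hr))
  have hgeom : (∑ j ∈ Finset.range d, (X : ℤ[X]) ^ (k * j)) * ((X : ℤ[X]) ^ k - 1)
      = (X : ℤ[X]) ^ (k * d) - 1 := by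
    have := geom_sum_mul ((X : ℤ[X]) ^ k) d
    simpa [← pow_mul] using this
  have hdvd1 : cyclotomic r ℤ ∣ (X : ℤ[X]) ^ (k * d) - 1 := by
    obtain ⟨m, hm⟩ := hrkd
    have h2 : (X : ℤ[X]) ^ r - 1 ∣ (X : ℤ[X]) ^ (k * d) - 1 := by
      rw [hm, pow_mul]
      simpa using sub_dvd_pow_sub_pow ((X : ℤ[X]) ^ r) 1 m
    exact (cyclotomic.dvd_X_pow_sub_one r ℤ).trans h2
  have hnd : ¬ cyclotomic r ℤ ∣ (X : ℤ[X]) ^ k - 1 := by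
    intro h
    have hζ := Complex.isPrimitiveRoot_exp r hr
    obtain ⟨q, hq⟩ := Polynomial.map_dvd (Int.castRingHom ℂ) h
    rw [map_cyclotomic_int] at hq
    have hroot : ((X : ℂ[X]) ^ k - 1).eval (Complex.exp (2 * Real.pi * Complex.I / r)) = 0 := by
      have h0 : (Polynomial.map (Int.castRingHom ℂ) ((X : ℤ[X]) ^ k - 1))
          = (X : ℂ[X]) ^ k - 1 := by
        simp
      rw [← h0, hq, eval_mul]
      have := hζ.isRoot_cyclotomic (Nat.pos_of_ne_zero hr)
      rw [IsRoot.def] at this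
      rw [this, zero_mul]
    apply hk
    rw [← hζ.pow_eq_one_iff_dvd]
    have : Complex.exp (2 * Real.pi * Complex.I / r) ^ k - 1 = 0 := by simpa using hroot
    linear_combination this
  rcases hprime.dvd_or_dvd (hgeom ▸ hdvd1) with h | h
  · exact h
  · exact absurd h hnd

private lemma orderOf_eq_of_isRoot_cyclotomic {F : Type*} [CommRing F] [IsDomain F] {ℓ : ℕ} (hℓ : ℓ.Prime)
    [CharP F ℓ] {e : ℕ} (he : e ≠ 0) {α : F} (hα : (cyclotomic e F).IsRoot α) :
    orderOf α = ordCompl[ℓ] e := by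
  haveI : Fact ℓ.Prime := ⟨hℓ⟩
  have hm : ¬ ℓ ∣ ordCompl[ℓ] e := Nat.not_dvd_ordCompl hℓ he
  haveI : NeZero ((ordCompl[ℓ] e : ℕ) : F) :=
    ⟨fun h => hm ((CharP.cast_eq_zero_iff F ℓ _).mp h)⟩
  have he' : e = ℓ ^ (e.factorization ℓ) * ordCompl[ℓ] e :=
    (Nat.ordProj_mul_ordCompl_eq_self e ℓ).symm
  rw [he'] at hα
  exact (Polynomial.isRoot_cyclotomic_prime_pow_mul_iff_of_charP.mp hα).eq_orderOf.symm

private lemma cyclotomic_mem_span (r : ℕ) (hr : r ≠ 0) :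
    cyclotomic r ℤ ∈ Ideal.span ({(X : ℤ[X]) ^ r - 1} ∪
      (fun p => ∑ j ∈ Finset.range p, (X : ℤ[X]) ^ (r / p * j)) '' ↑r.primeFactors) := by
  classical
  set Φ : ℤ[X] := cyclotomic r ℤ with hΦ
  set f : ℕ → ℤ[X] := fun p => ∑ j ∈ Finset.range p, (X : ℤ[X]) ^ (r / p * j) with hfdef
  set g : ℕ → ℤ[X] :=
    fun p => ∏ e ∈ (r.divisors \ (r / p).divisors).erase r, cyclotomic e ℤ with hgdef
  set P : ℤ[X] := ∏ e ∈ r.divisors.erase r, cyclotomic e ℤ with hPdef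
  have hrdiv : r ∈ r.divisors := Nat.mem_divisors_self r hr
  have hc1 : Φ * P = (X : ℤ[X]) ^ r - 1 := by
    rw [hPdef, hΦ, Finset.mul_prod_erase r.divisors (fun e => cyclotomic e ℤ) hrdiv]
    exact prod_cyclotomic_eq_X_pow_sub_one (Nat.pos_of_ne_zero hr) ℤ
  have hc2 : ∀ p ∈ r.primeFactors, Φ * g p = f p := by
    intro p hp
    obtain ⟨hpp, hpdvd, -⟩ := Nat.mem_primeFactors.mp hp
    have hrp0 : r / p ≠ 0 :=
      Nat.div_ne_zero_iff.mpr ⟨hpp.ne_zero, Nat.le_of_dvd (Nat.pos_of_ne_zero hr) hpdvd⟩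
    have hrpdvd : r / p ∣ r := Nat.div_dvd_of_dvd hpdvd
    have hsub : (r / p).divisors ⊆ r.divisors := Nat.divisors_subset_of_dvd hr hrpdvd
    have hrpr : ¬ r ∣ r / p := by
      intro h
      have h1 : r ≤ r / p := Nat.le_of_dvd (Nat.pos_of_ne_zero hrp0) h
      have h2 : r / p < r := Nat.div_lt_self (Nat.pos_of_ne_zero hr) hpp.one_lt
      omega
    have hrmem : r ∈ r.divisors \ (r / p).divisors := by
      rw [Finset.mem_sdiff]
      exact ⟨hrdiv, fun h => hrpr (Nat.mem_divisors.mp h).1⟩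
    have hXne : ((X : ℤ[X]) ^ (r / p) - 1) ≠ 0 := by
      have : ((X : ℤ[X]) ^ (r / p) - 1).Monic := by
        simpa using monic_X_pow_sub_C (1 : ℤ) hrp0
      exact this.ne_zero
    apply mul_left_cancel₀ hXne
    have e1 : Φ * g p = ∏ e ∈ r.divisors \ (r / p).divisors, cyclotomic e ℤ := by
      show cyclotomic r ℤ * ∏ e ∈ (r.divisors \ (r / p).divisors).erase r, cyclotomic e ℤ = _
      exact Finset.mul_prod_erase (r.divisors \ (r / p).divisors) (fun e => cyclotomic e ℤ) hrmem
    have e2 : (∏ e ∈ (r / p).divisors, cyclotomic e ℤ) = (X : ℤ[X]) ^ (r / p) - 1 :=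
      prod_cyclotomic_eq_X_pow_sub_one (Nat.pos_of_ne_zero hrp0) ℤ
    calc ((X : ℤ[X]) ^ (r / p) - 1) * (Φ * g p)
        = (∏ e ∈ r.divisors \ (r / p).divisors, cyclotomic e ℤ) *
            ∏ e ∈ (r / p).divisors, cyclotomic e ℤ := by rw [e1, e2]; ring
      _ = ∏ e ∈ r.divisors, cyclotomic e ℤ := Finset.prod_sdiff hsub
      _ = (X : ℤ[X]) ^ r - 1 := prod_cyclotomic_eq_X_pow_sub_one (Nat.pos_of_ne_zero hr) ℤ
      _ = ((X : ℤ[X]) ^ (r / p) - 1) * f p := by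
          rw [mul_comm]
          show _ = (∑ j ∈ Finset.range p, (X : ℤ[X]) ^ (r / p * j)) *
            ((X : ℤ[X]) ^ (r / p) - 1)
          calc (X : ℤ[X]) ^ r - 1 = ((X : ℤ[X]) ^ (r / p)) ^ p - 1 := by
                rw [← pow_mul, Nat.div_mul_cancel hpdvd]
            _ = (∑ j ∈ Finset.range p, ((X : ℤ[X]) ^ (r / p)) ^ j) *
                  ((X : ℤ[X]) ^ (r / p) - 1) := (geom_sum_mul _ _).symm
            _ = (∑ j ∈ Finset.range p, (X : ℤ[X]) ^ (r / p * j)) *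
                  ((X : ℤ[X]) ^ (r / p) - 1) := by simp [pow_mul]
  -- the auxiliary ideal is the whole ring
  set K : Ideal ℤ[X] := Ideal.span (insert P (g '' ↑r.primeFactors)) with hK
  have hKtop : K = ⊤ := by
    by_contra hKt
    obtain ⟨m, hm, hKm⟩ := Ideal.exists_le_maximal K hKt
    haveI := hm
    haveI : m.IsPrime := hm.isPrime
    set α : ℤ[X] ⧸ m := Ideal.Quotient.mk m X with hα
    have hψ : ∀ q : ℤ[X], Ideal.Quotient.mk m q = aeval α q := by
      intro q
      have h0 : (Ideal.Quotient.mkₐ ℤ m) = aeval α := Polynomial.algHom_ext (by simp [hα])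
      calc Ideal.Quotient.mk m q = (Ideal.Quotient.mkₐ ℤ m) q := rfl
        _ = aeval α q := by rw [h0]
    have heval : ∀ e : ℕ,
        Ideal.Quotient.mk m (cyclotomic e ℤ) = (cyclotomic e (ℤ[X] ⧸ m)).eval α := by
      intro e
      rw [hψ, ← map_cyclotomic_int e (ℤ[X] ⧸ m), eval_map, aeval_def]
      rfl
    -- the characteristic of F
    set ℓ : ℕ := ringChar (ℤ[X] ⧸ m) with hℓ
    haveI hcharF : CharP (ℤ[X] ⧸ m) ℓ := ringChar.charP _
    have hℓprime : ℓ.Prime := by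
      rcases CharP.char_is_prime_or_zero (ℤ[X] ⧸ m) ℓ with h | h
      · exact h
      · exfalso
        haveI : CharP (ℤ[X] ⧸ m) 0 := h ▸ hcharF
        haveI : CharZero (ℤ[X] ⧸ m) := CharP.charP_to_charZero _
        have hcm : (m.comap (C : ℤ →+* ℤ[X])).IsMaximal :=
          Polynomial.isMaximal_comap_C_of_isJacobsonRing m
        have hker : m.comap (C : ℤ →+* ℤ[X]) = ⊥ := by
          ext n
          simp only [Ideal.mem_comap, Submodule.mem_bot]
          constructor
          · intro hn
            have h1 : ((n : ℤ) : (ℤ[X] ⧸ m)) = 0 := by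
              have h2 : Ideal.Quotient.mk m (C n) = 0 := Ideal.Quotient.eq_zero_iff_mem.mpr hn
              rwa [show (C n : ℤ[X]) = ((n : ℤ) : ℤ[X]) by simp,
                map_intCast (Ideal.Quotient.mk m) n] at h2
            exact Int.cast_eq_zero.mp h1
          · rintro rfl; simp
        rw [hker] at hcm
        have h2 : (Ideal.span {(2 : ℤ)}) ≠ ⊤ := by
          intro h
          have h3 := Ideal.span_singleton_eq_top.mp h
          rw [Int.isUnit_iff] at h3
          omega
        have h3 : (⊥ : Ideal ℤ) = Ideal.span {(2 : ℤ)} :=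
          (hcm.eq_of_le h2 bot_le)
        have h4 : (2 : ℤ) ∈ (⊥ : Ideal ℤ) := h3 ▸ Ideal.mem_span_singleton_self 2
        simpa using h4
    -- the root coming from P
    have hPm : P ∈ m := hKm (Ideal.subset_span (Set.mem_insert _ _))
    have hprod0 : (∏ e ∈ r.divisors.erase r, (cyclotomic e (ℤ[X] ⧸ m)).eval α) = 0 := by
      have h0 := Ideal.Quotient.eq_zero_iff_mem.mpr hPm
      rw [hPdef, map_prod] at h0
      rw [← h0]
      exact Finset.prod_congr rfl fun e _ => (heval e).symm
    obtain ⟨e₀, he₀mem, he₀root⟩ := Finset.prod_eq_zero_iff.mp hprod0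
    have he₀ner : e₀ ≠ r := (Finset.mem_erase.mp he₀mem).1
    have he₀dvd : e₀ ∣ r := (Nat.mem_divisors.mp (Finset.mem_erase.mp he₀mem).2).1
    have he₀0 : e₀ ≠ 0 := fun h => hr (by simpa [h] using he₀dvd)
    set d : ℕ := orderOf α with hdd
    have hd : d = ordCompl[ℓ] e₀ :=
      orderOf_eq_of_isRoot_cyclotomic hℓprime he₀0 he₀root
    have hd0 : d ≠ 0 := by
      rw [hd]; exact (Nat.ordCompl_pos ℓ he₀0).ne'
    have hdr : d ∣ r := (hd ▸ Nat.ordCompl_dvd e₀ ℓ).trans he₀dvd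
    have hdner : d ≠ r := by
      intro h
      apply he₀ner
      refine Nat.dvd_antisymm he₀dvd ?_
      rw [← h, hd]
      exact Nat.ordCompl_dvd e₀ ℓ
    have hld : ¬ ℓ ∣ d := hd ▸ Nat.not_dvd_ordCompl hℓprime he₀0
    -- roots coming from the g p
    have subclaim : ∀ p : ℕ, p ∈ r.primeFactors →
        ∃ e', e' ≠ 0 ∧ e' ∣ r ∧ e' ≠ r ∧ r.factorization p ≤ e'.factorization p ∧
          d = ordCompl[ℓ] e' := by
      intro p hp
      obtain ⟨hpp, hpdvd, -⟩ := Nat.mem_primeFactors.mp hp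
      have hrp0 : r / p ≠ 0 :=
        Nat.div_ne_zero_iff.mpr ⟨hpp.ne_zero, Nat.le_of_dvd (Nat.pos_of_ne_zero hr) hpdvd⟩
      have hgm : g p ∈ m :=
        hKm (Ideal.subset_span (Set.mem_insert_iff.mpr (Or.inr ⟨p, by simpa using hp, rfl⟩)))
      have hprod0' :
          (∏ e ∈ (r.divisors \ (r / p).divisors).erase r,
            (cyclotomic e (ℤ[X] ⧸ m)).eval α) = 0 := by
        have h0 := Ideal.Quotient.eq_zero_iff_mem.mpr hgm
        rw [hgdef, map_prod] at h0
        rw [← h0]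
        exact Finset.prod_congr rfl fun e _ => (heval e).symm
      obtain ⟨e', he'mem, he'root⟩ := Finset.prod_eq_zero_iff.mp hprod0'
      obtain ⟨he'ner, he'mem2⟩ := Finset.mem_erase.mp he'mem
      obtain ⟨he'div, he'not⟩ := Finset.mem_sdiff.mp he'mem2
      have he'dvd : e' ∣ r := (Nat.mem_divisors.mp he'div).1
      have he'0 : e' ≠ 0 := fun h => hr (by simpa [h] using he'dvd)
      have he'ndvd : ¬ e' ∣ r / p := fun h => he'not (Nat.mem_divisors.mpr ⟨h, hrp0⟩)
      refine ⟨e', he'0, he'dvd, he'ner, ?_,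
        orderOf_eq_of_isRoot_cyclotomic hℓprime he'0 he'root⟩
      by_contra hlt
      push_neg at hlt
      apply he'ndvd
      rw [← Nat.factorization_le_iff_dvd he'0 hrp0, Finsupp.le_def]
      intro q
      rw [Nat.factorization_div hpdvd]
      rw [Finsupp.tsub_apply, hpp.factorization]
      by_cases hq : q = p
      · subst hq
        rw [Finsupp.single_eq_same]
        omega
      · rw [Finsupp.single_eq_of_ne' (Ne.symm hq), tsub_zero]
        exact (Nat.factorization_le_iff_dvd he'0 hr).mpr he'dvd q
    -- derive the contradiction
    by_cases hex : ∃ p : ℕ, p.Prime ∧ p ≠ ℓ ∧ d.factorization p < r.factorization p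
    · obtain ⟨p, hpp, hpne, hplt⟩ := hex
      have hpr : p ∣ r := Nat.dvd_of_factorization_pos (by omega)
      obtain ⟨e', he'0, he'dvd, he'ner, hle, hde'⟩ :=
        subclaim p (Nat.mem_primeFactors.mpr ⟨hpp, hpr, hr⟩)
      have heq : d.factorization p = e'.factorization p := by
        rw [hde', Nat.factorization_ordCompl, Finsupp.erase_ne hpne]
      omega
    · push_neg at hex
      have hℓr : ℓ ∣ r := by
        by_contra hℓr
        apply hdner
        refine Nat.dvd_antisymm hdr ?_
        rw [← Nat.factorization_le_iff_dvd hr hd0, Finsupp.le_def]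
        intro q
        by_cases hq : q.Prime
        · by_cases hqℓ : q = ℓ
          · subst hqℓ
            simp [Nat.factorization_eq_zero_of_not_dvd hℓr]
          · exact hex q hq hqℓ
        · simp [Nat.factorization_eq_zero_of_not_prime _ hq]
      obtain ⟨e', he'0, he'dvd, he'ner, hle, hde'⟩ :=
        subclaim ℓ (Nat.mem_primeFactors.mpr ⟨hℓprime, hℓr, hr⟩)
      apply he'ner
      refine Nat.dvd_antisymm he'dvd ?_
      rw [← Nat.factorization_le_iff_dvd hr he'0, Finsupp.le_def]
      intro q
      by_cases hq : q.Prime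
      · by_cases hqℓ : q = ℓ
        · subst hqℓ; exact hle
        · have h1 : r.factorization q ≤ d.factorization q := hex q hq hqℓ
          have h2 : d.factorization q = e'.factorization q := by
            rw [hde', Nat.factorization_ordCompl, Finsupp.erase_ne hqℓ]
          omega
      · simp [Nat.factorization_eq_zero_of_not_prime _ hq]
  -- conclude
  have h1K : (1 : ℤ[X]) ∈ K := hKtop ▸ Submodule.mem_top
  have hmul : ∀ b ∈ K, Φ * b ∈ Ideal.span ({(X : ℤ[X]) ^ r - 1} ∪ f '' ↑r.primeFactors) := by
    intro b hb
    refine Submodule.span_induction ?_ ?_ ?_ ?_ hb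
    · rintro x hx
      rcases Set.mem_insert_iff.mp hx with rfl | ⟨p, hp, rfl⟩
      · rw [hc1]
        exact Ideal.subset_span (Or.inl rfl)
      · rw [hc2 p (by simpa using hp)]
        exact Ideal.subset_span (Or.inr ⟨p, by simpa using hp, rfl⟩)
    · simp
    · intro x y _ _ hx hy
      rw [mul_add]; exact Ideal.add_mem _ hx hy
    · intro a x _ hx
      rw [smul_eq_mul, mul_left_comm]
      exact Ideal.mul_mem_left _ a hx
  have := hmul 1 h1K
  simpa using this

/-- For `G` finite cyclic of order `r` with generator `τ`, the
following ideals of `ℤ[G]` coincide: the ideal generated by `Φ_r(τ)`, the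
ideal generated by `{N_H : H a nontrivial subgroup}`, and the ideal
generated by `{N_H : H a subgroup of prime order}`. -/
theorem stmt_10 (G : Type*) [CommGroup G] [Fintype G] (r : ℕ)
    (hcard : Fintype.card G = r) (τ : G) (hτ : ∀ g : G, g ∈ Subgroup.zpowers τ) :
    Ideal.span {Polynomial.aeval (MonoidAlgebra.of ℤ G τ) (cyclotomic r ℤ)} =
      Ideal.span (normElt '' {H : Subgroup G | H ≠ ⊥}) ∧
    Ideal.span {Polynomial.aeval (MonoidAlgebra.of ℤ G τ) (cyclotomic r ℤ)} =
      Ideal.span (normElt '' {H : Subgroup G | (Nat.card H).Prime}) := by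
  classical
  have hr0 : r ≠ 0 := by
    rw [← hcard]; exact Fintype.card_ne_zero
  have hτord : orderOf τ = r := by
    rw [orderOf_eq_card_of_forall_mem_zpowers hτ, Nat.card_eq_fintype_card, hcard]
  set t : MonoidAlgebra ℤ G := MonoidAlgebra.of ℤ G τ with ht
  set π : ℤ[X] →ₐ[ℤ] MonoidAlgebra ℤ G := aeval t with hπ
  set Φt : MonoidAlgebra ℤ G := π (cyclotomic r ℤ) with hΦt
  -- direction A : norms of nontrivial subgroups lie in (Φ_r(τ))
  have hA : ∀ H : Subgroup G, H ≠ ⊥ → normElt H ∈ Ideal.span {Φt} := by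
    intro H hH
    haveI : IsCyclic G := ⟨⟨τ, hτ⟩⟩
    obtain ⟨σ₀, hσ₀⟩ := IsCyclic.exists_generator (α := H)
    set σ : G := (σ₀ : G) with hσdef
    have hHσ : H = Subgroup.zpowers σ := by
      ext x
      constructor
      · intro hx
        obtain ⟨n, hn⟩ := hσ₀ ⟨x, hx⟩
        refine ⟨n, ?_⟩
        have := congrArg (Subgroup.subtype H) hn
        simpa using this
      · rintro ⟨n, rfl⟩
        exact Subgroup.zpow_mem H σ₀.2 n
    have hσ1 : σ ≠ 1 := by
      intro h
      apply hH
      rw [hHσ, h, Subgroup.zpowers_one_eq_bot]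
    obtain ⟨k, hk0⟩ := ((isOfFinOrder_of_finite τ).mem_powers_iff_mem_zpowers).mpr (hτ σ)
    have hk : τ ^ k = σ := hk0
    have hrk : ¬ r ∣ k := by
      intro hdvd
      apply hσ1
      rw [← hk]
      exact orderOf_dvd_iff_pow_eq_one.mp (hτord ▸ hdvd)
    have hrkd : r ∣ k * orderOf σ := by
      rw [← hτord]
      apply orderOf_dvd_of_pow_eq_one
      rw [pow_mul, hk, pow_orderOf_eq_one]
    have hdvdpoly := cyclotomic_dvd_geom_sum hr0 hrk hrkd
    have hdvd2 := map_dvd π hdvdpoly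
    rw [Ideal.mem_span_singleton]
    have hπsum : π (∑ j ∈ Finset.range (orderOf σ), (X : ℤ[X]) ^ (k * j)) = normElt H := by
      rw [hHσ, normElt_zpowers, map_sum]
      refine Finset.sum_congr rfl fun j _ => ?_
      rw [map_pow, hπ, aeval_X, pow_mul, ht, ← map_pow (MonoidAlgebra.of ℤ G), hk]
    rw [← hπsum]
    exact hdvd2
  -- π kills X^r - 1
  have hπXr : π ((X : ℤ[X]) ^ r - 1) = 0 := by
    have hτr : τ ^ r = 1 := by rw [← hcard]; exact pow_card_eq_one
    rw [map_sub, map_pow, map_one, hπ, aeval_X, ht, ← map_pow (MonoidAlgebra.of ℤ G), hτr,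
      map_one, sub_self]
  -- direction B : Φ_r(τ) lies in the span of the prime-order norms
  have hB : Φt ∈ Ideal.span (normElt '' {H : Subgroup G | (Nat.card H).Prime}) := by
    have hmem := cyclotomic_mem_span r hr0
    have hmap := Ideal.mem_map_of_mem (π : ℤ[X] →+* MonoidAlgebra ℤ G) hmem
    rw [Ideal.map_span] at hmap
    refine Ideal.span_le.mpr ?_ hmap
    rintro y ⟨x, hx, rfl⟩
    rcases hx with rfl | ⟨p, hp, rfl⟩
    · show (π ((X : ℤ[X]) ^ r - 1)) ∈ _
      rw [hπXr]
      exact Ideal.zero_mem _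
    · have hp' : p ∈ r.primeFactors := by simpa using hp
      obtain ⟨hpp, hpdvd, -⟩ := Nat.mem_primeFactors.mp hp'
      set σp : G := τ ^ (r / p) with hσp
      have hord : orderOf σp = p := by
        rw [hσp, orderOf_pow, hτord, Nat.gcd_comm,
          Nat.gcd_eq_left (Nat.div_dvd_of_dvd hpdvd), Nat.div_div_self hpdvd hr0]
      have hcardp : (Nat.card (Subgroup.zpowers σp)).Prime := by
        rw [Nat.card_zpowers, hord]; exact hpp
      have hval : (π : ℤ[X] →+* MonoidAlgebra ℤ G)
          (∑ j ∈ Finset.range p, (X : ℤ[X]) ^ (r / p * j)) = normElt (Subgroup.zpowers σp) := by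
        rw [normElt_zpowers, hord]
        show π _ = _
        rw [map_sum]
        refine Finset.sum_congr rfl fun j _ => ?_
        rw [map_pow, hπ, aeval_X, pow_mul, ht, ← map_pow (MonoidAlgebra.of ℤ G), hσp]
      rw [hval]
      exact Ideal.subset_span ⟨Subgroup.zpowers σp, hcardp, rfl⟩
  -- assemble
  have hI31 : Ideal.span (normElt '' {H : Subgroup G | (Nat.card H).Prime}) ≤
      Ideal.span (normElt '' {H : Subgroup G | H ≠ ⊥}) := by
    apply Ideal.span_mono
    apply Set.image_mono
    intro H hH
    intro hbot
    rw [Set.mem_setOf_eq, hbot] at hH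
    simp [Nat.card_eq_fintype_card] at hH
    exact Nat.Prime.ne_one hH rfl
  have hI21 : Ideal.span (normElt '' {H : Subgroup G | H ≠ ⊥}) ≤ Ideal.span {Φt} := by
    refine Ideal.span_le.mpr ?_
    rintro y ⟨H, hH, rfl⟩
    exact hA H hH
  have hI13 : Ideal.span {Φt} ≤
      Ideal.span (normElt '' {H : Subgroup G | (Nat.card H).Prime}) := by
    refine Ideal.span_le.mpr ?_
    rintro y hy
    rw [Set.mem_singleton_iff] at hy
    subst hy
    exact hB
  constructor
  · exact le_antisymm (hI13.trans hI31) hI21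
  · exact le_antisymm hI13 (hI31.trans hI21)

end
end

section
/- Let R be a ring, let s : M → N be a homomorphism of R-modules, and let n be a positive integer such that n·x = 0 for every x in the kernel of s and n·y = 0 for every y in the cokernel of s (i.e., n·N ⊆ s(M)). Then there exists an R-module homomorphism t : N → M such that t∘s = n²·id_M and s∘t = n²·id_N. -/
/-- If `s : M → N` is an `R`-module homomorphism and `n` is a
positive integer annihilating both the kernel and the cokernel of `s`
(i.e. `n·N ⊆ s(M)`), then there is an `R`-module homomorphism `t : N → M`
with `t∘s = n²·id_M` and `s∘t = n²·id_N`. -/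
theorem stmt_18 (R : Type*) [Ring R] (M N : Type*)
    [AddCommGroup M] [Module R M] [AddCommGroup N] [Module R N]
    (s : M →ₗ[R] N) (n : ℕ) (hn : 0 < n)
    (hker : ∀ x ∈ LinearMap.ker s, n • x = 0)
    (hcoker : ∀ y : N, n • y ∈ LinearMap.range s) :
    ∃ t : N →ₗ[R] M,
      (∀ x : M, t (s x) = n ^ 2 • x) ∧ (∀ y : N, s (t y) = n ^ 2 • y) := by
  classical
  -- f y = n • (some preimage of n • y)
  set f : N → M := fun y => n • Classical.choose (hcoker y) with hf
  have hsf : ∀ y, s (Classical.choose (hcoker y)) = n • y :=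
    fun y => Classical.choose_spec (hcoker y)
  -- uniqueness: any x with s x = n • y satisfies n • x = f y
  have key : ∀ (y : N) (x : M), s x = n • y → n • x = f y := by
    intro y x hx
    have hmem : x - Classical.choose (hcoker y) ∈ LinearMap.ker s := by
      simp [LinearMap.mem_ker, map_sub, hx, hsf y]
    have := hker _ hmem
    rw [smul_sub, sub_eq_zero] at this
    simpa [hf] using this
  have hsff : ∀ y, s (f y) = n ^ 2 • y := by
    intro y
    simp [hf, map_nsmul, hsf y, smul_smul, pow_two]
  refine ⟨{ toFun := f
            map_add' := ?_
            map_smul' := ?_ }, ?_, ?_⟩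
  · intro y z
    have h1 : s (Classical.choose (hcoker y) + Classical.choose (hcoker z))
        = n • (y + z) := by
      simp [map_add, hsf, smul_add]
    have := key (y + z) _ h1
    rw [smul_add] at this
    simpa [hf] using this.symm
  · intro r y
    have h1 : s (r • Classical.choose (hcoker y)) = n • (r • y) := by
      rw [map_smul, hsf, smul_comm]
    have := key (r • y) _ h1
    rw [smul_comm] at this
    simpa [hf] using this.symm
  · intro x
    have h1 : s (n • x) = n • (s x) := by rw [map_nsmul]
    have := key (s x) _ h1
    simpa [smul_smul, pow_two] using this.symm
  · intro y
    exact hsff y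
end
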